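/- For x ∈ [0, 1 − √3/2], the function f(x) = (1 + √(1 + 4x²)) / (2 + √3 + 2x) is non-increasing, and its minimum on that interval equals (1 + 2√(2 − √3))/4. -/

import Mathlib

open Real Set

/-! On `[0, 1 / c]` the numerator `1 + √(1 + 4x²)` grows more slowly than the denominator
`c + 2x`: the logarithmic derivative of the ratio has the sign of `2cx - 1 - √(1 + 4x²)`, and
`2cx ≤ 2 ≤ 1 + √(1 + 4x²)`. For `c = 2 + √3` one has `1 / c = 2 - √3 ≥ 1 - √3/2`, so the ratio is
antitone on the interval of the statement and its minimum is the value at the right endpoint,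
where `1 + 4x² = 4 (2 - √3)`. -/

theorem one_add_four_mul_le_sqrt_mul_sqrt (a b : ℝ) :
    1 + 4 * a * b ≤ √(1 + 4 * a ^ 2) * √(1 + 4 * b ^ 2) := by
  rw [← sqrt_mul (by positivity)]
  exact le_sqrt_of_sq_le (by nlinarith [sq_nonneg (a - b)])

theorem antitoneOn_one_add_sqrt_div {c : ℝ} (hc : 0 < c) :
    AntitoneOn (fun x : ℝ => (1 + √(1 + 4 * x ^ 2)) / (c + 2 * x)) (Icc 0 c⁻¹) := by
  rintro a ⟨ha, -⟩ b ⟨-, hbc⟩ hab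
  have hcb : c * b ≤ 1 := by
    simpa [mul_inv_cancel₀ hc.ne'] using mul_le_mul_of_nonneg_left hbc hc.le
  set u := √(1 + 4 * a ^ 2)
  set v := √(1 + 4 * b ^ 2)
  have hu : u ^ 2 = 1 + 4 * a ^ 2 := sq_sqrt (by positivity)
  have hv : v ^ 2 = 1 + 4 * b ^ 2 := sq_sqrt (by positivity)
  have hu1 : 1 ≤ u := one_le_sqrt.2 (by nlinarith)
  have hv1 : 1 ≤ v := one_le_sqrt.2 (by nlinarith)
  have huv : 1 + 4 * a * b ≤ u * v := one_add_four_mul_le_sqrt_mul_sqrt a b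
  rw [div_le_div_iff₀ (by linarith) (by linarith)]
  -- `(v - u)(u + v) = 4 (b - a)(a + b)` reduces the claim to `2 c (a + b) ≤ 2 + u + v`
  have hvu : (v - u) * (u + v) = 4 * (b - a) * (a + b) := by rw [sub_mul]; nlinarith
  nlinarith [mul_nonneg (sub_nonneg.2 hab) (sub_nonneg.2 huv), mul_nonneg hc.le ha,
    mul_nonneg (sub_nonneg.2 hab) hc.le]

theorem sqrt_one_add_four_mul_sq_one_sub_sqrt_three_div_two :
    √(1 + 4 * (1 - √3 / 2) ^ 2) = 2 * √(2 - √3) := by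
  have h3 : √3 ^ 2 = 3 := sq_sqrt (by norm_num)
  have h3le : √3 ≤ 2 := by nlinarith [sqrt_nonneg 3]
  rw [show 1 + 4 * (1 - √3 / 2) ^ 2 = 2 ^ 2 * (2 - √3) by nlinarith,
    sqrt_mul (by positivity), sqrt_sq zero_le_two]

/-- On `[0, 1 − √3/2]` the function `f(x) = (1 + √(1 + 4x²)) / (2 + √3 + 2x)` is
non-increasing, and its minimum there equals `(1 + 2√(2 − √3))/4`. -/
theorem stmt_17 :
    AntitoneOn (fun x : ℝ => (1 + Real.sqrt (1 + 4 * x ^ 2)) / (2 + Real.sqrt 3 + 2 * x))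
        (Set.Icc 0 (1 - Real.sqrt 3 / 2)) ∧
      IsLeast ((fun x : ℝ => (1 + Real.sqrt (1 + 4 * x ^ 2)) / (2 + Real.sqrt 3 + 2 * x)) ''
          Set.Icc 0 (1 - Real.sqrt 3 / 2))
        ((1 + 2 * Real.sqrt (2 - Real.sqrt 3)) / 4) := by
  have h3 : √3 ^ 2 = 3 := sq_sqrt (by norm_num)
  have h3le : √3 ≤ 2 := by nlinarith [sqrt_nonneg 3]
  have hc : 0 < 2 + √3 := by positivity
  have hinv : (2 + √3)⁻¹ = 2 - √3 := inv_eq_of_mul_eq_one_right (by nlinarith)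
  have hanti : AntitoneOn (fun x : ℝ => (1 + √(1 + 4 * x ^ 2)) / (2 + √3 + 2 * x))
      (Icc 0 (1 - √3 / 2)) :=
    (antitoneOn_one_add_sqrt_div hc).mono
      (Icc_subset_Icc_right (by rw [hinv]; linarith [sqrt_nonneg 3]))
  refine ⟨hanti, ?_⟩
  have hmin := hanti.map_isGreatest (isGreatest_Icc (by linarith))
  beta_reduce at hmin
  rwa [sqrt_one_add_four_mul_sq_one_sub_sqrt_three_div_two,
    show 2 + √3 + 2 * (1 - √3 / 2) = 4 by ring] at hmin
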